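/- (Deterministic form of Lemma 3.3(iii)a) Suppose 0 < α_P^high < α_A^high. Then the supremum of F(a,z,γ,δ,α_P^high,α_A^high) over all deterministic actions a, all z ∈ ℝ, all δ ∈ ℝ, and all γ with -R_P(1-z)² < γ < R_A z², equals G(a*, z*, α_P^high). -/

import Mathlib

open MeasureTheory

/-- The objective `F(a,z,γ,δ,α_P,α_A)` from the first-best problem. -/
noncomputable def Fobj (R_A R_P ρ T : ℝ) (k a : ℝ → ℝ) (z γ δ αP αA : ℝ) : ℝ :=
  -Real.exp (R_P * (δ - (1 - z) * (∫ s in (0:ℝ)..T, a s)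
      + (R_P * (1 - z) ^ 2 / 2 + γ / 2) * αP * T))
  - ρ * Real.exp (R_A * ((∫ s in (0:ℝ)..T, k (a s))
      - z * (∫ s in (0:ℝ)..T, a s) - δ + (R_A * z ^ 2 / 2 - γ / 2) * αA * T))

/-- The quantity `G(a,z,γ,α_P,α_A)`. -/
noncomputable def Gobj (R_A R_P ρ T : ℝ) (k a : ℝ → ℝ) (z γ αP αA : ℝ) : ℝ :=
  -(ρ ^ (R_P / (R_A + R_P)) * ((R_A + R_P) / R_P)
      * (R_A / R_P) ^ (-(R_A / (R_A + R_P)))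
      * Real.exp ((R_A * R_P / (R_A + R_P)) * ((∫ s in (0:ℝ)..T, (k (a s) - a s))
          + γ / 2 * T * (αP - αA)
          + T / 2 * (αP * R_P * (1 - z) ^ 2 + αA * R_A * z ^ 2))))

/-- A deterministic action: a measurable map `[0,T] → [0, a_max]`. -/
def IsAction (T aMax : ℝ) (a : ℝ → ℝ) : Prop :=
  Measurable a ∧ ∀ s ∈ Set.Icc (0 : ℝ) T, a s ∈ Set.Icc (0 : ℝ) aMax

/-!
For fixed `a, z, γ`, the parameter `δ` only trades one exponential term of `F` against the other:
weighted AM-GM with weights `R_A/(R_A+R_P)` and `R_P/(R_A+R_P)` shows that the supremum over `δ`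
is exactly `G(a,z,γ,α_P,α_A)`, and it is attained. The exponent of `G` is then bounded below,
term by term: `a*` minimises `k(x) - x`, `z*` minimises `R_P(1-z)² + R_A z²`, and
`(α_A - α_P)(R_A z² - γ) ≥ 0`. The last bound is not attained, but it is approached along
`a = a*`, `z = z*`, `γ ↑ R_A z*²`, where `G` tends to `G(a*, z*, α_P)`.
-/

open Real Set Filter

lemma rpow_div_mul_rpow_div_le_add {p q u v : ℝ} (hp : 0 < p) (hq : 0 < q) (hpq : p + q = 1)
    (hu : 0 ≤ u) (hv : 0 ≤ v) : (u / p) ^ p * (v / q) ^ q ≤ u + v := by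
  have h := geom_mean_le_arith_mean2_weighted hp.le hq.le (div_nonneg hu hp.le)
    (div_nonneg hv hq.le) hpq
  rwa [mul_div_cancel₀ u hp.ne', mul_div_cancel₀ v hq.ne'] at h

lemma rpow_div_mul_rpow_div_eq_add {p q u v : ℝ} (hp : 0 < p) (hq : 0 < q) (hpq : p + q = 1)
    (hv : 0 ≤ v) (h : u / p = v / q) : (u / p) ^ p * (v / q) ^ q = u + v := by
  rw [h, ← rpow_add' (div_nonneg hv hq.le) (by rw [hpq]; exact one_ne_zero), hpq, rpow_one]
  calc v / q = (p + q) * (v / q) := by rw [hpq, one_mul]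
    _ = u + v := by rw [add_mul, mul_div_cancel₀ v hq.ne', ← h, mul_div_cancel₀ u hp.ne']

lemma rpow_self_mul_rpow_self {p q : ℝ} (hp : 0 < p) (hq : 0 < q) (hpq : p + q = 1) :
    p ^ p * q ^ q = q * (p / q) ^ p := by
  rw [show p ^ p = (p / q * q) ^ p by rw [div_mul_cancel₀ p hq.ne'], mul_rpow (div_pos hp hq).le hq.le, mul_assoc, ← rpow_add hq, hpq, rpow_one, mul_comm]

lemma weighted_sq_ge {R_A R_P : ℝ} (hRA : 0 < R_A) (hRP : 0 < R_P) (z : ℝ) :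
    R_P * (1 - R_P / (R_A + R_P)) ^ 2 + R_A * (R_P / (R_A + R_P)) ^ 2
      ≤ R_P * (1 - z) ^ 2 + R_A * z ^ 2 := by
  have hS : 0 < R_A + R_P := by positivity
  have hgap : R_P * (1 - z) ^ 2 + R_A * z ^ 2
      - (R_P * (1 - R_P / (R_A + R_P)) ^ 2 + R_A * (R_P / (R_A + R_P)) ^ 2)
      = (R_A + R_P) * (z - R_P / (R_A + R_P)) ^ 2 := by
    field_simp
    ring
  linarith [mul_nonneg hS.le (sq_nonneg (z - R_P / (R_A + R_P)))]

noncomputable def Gconst (R_A R_P ρ : ℝ) : ℝ :=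
  ρ ^ (R_P / (R_A + R_P)) * ((R_A + R_P) / R_P) * (R_A / R_P) ^ (-(R_A / (R_A + R_P)))

section Gconst

variable {R_A R_P ρ : ℝ}

lemma rpow_exp_div_mul_rpow_exp_div (hRA : 0 < R_A) (hRP : 0 < R_P) (hρ : 0 < ρ) (X Y : ℝ) :
    (exp X / (R_A / (R_A + R_P))) ^ (R_A / (R_A + R_P))
        * (ρ * exp Y / (R_P / (R_A + R_P))) ^ (R_P / (R_A + R_P))
      = Gconst R_A R_P ρ * exp (R_A / (R_A + R_P) * X + R_P / (R_A + R_P) * Y) := by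
  have hp : 0 < R_A / (R_A + R_P) := by positivity
  have hq : 0 < R_P / (R_A + R_P) := by positivity
  have hpq : R_A / (R_A + R_P) + R_P / (R_A + R_P) = 1 := by field_simp
  have hw := rpow_self_mul_rpow_self hp hq hpq
  have hp_div_q : R_A / (R_A + R_P) / (R_P / (R_A + R_P)) = R_A / R_P := by field_simp
  -- with `p, q` the two weights, `Gconst = ρ ^ q / (p ^ p * q ^ q)`
  rw [Gconst, div_rpow (exp_pos X).le hp.le, div_rpow (by positivity) hq.le,
    mul_rpow hρ.le (exp_pos Y).le, ← exp_mul, ← exp_mul, rpow_neg (by positivity),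
    ← inv_div R_P, exp_add, ← hp_div_q, mul_assoc (ρ ^ _), ← mul_inv, ← hw, mul_comm X,
    mul_comm Y]
  ring

lemma isLeast_exp_add_exp (hRA : 0 < R_A) (hRP : 0 < R_P) (hρ : 0 < ρ) (A B : ℝ) :
    IsLeast (range fun δ => exp (R_P * (δ + A)) + ρ * exp (R_A * (B - δ)))
      (Gconst R_A R_P ρ * exp (R_A * R_P / (R_A + R_P) * (A + B))) := by
  have hp : 0 < R_A / (R_A + R_P) := by positivity
  have hq : 0 < R_P / (R_A + R_P) := by positivity
  have hpq : R_A / (R_A + R_P) + R_P / (R_A + R_P) = 1 := by field_simp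
  -- the geometric mean of AM-GM does not depend on `δ`
  have hgeom : ∀ δ, (exp (R_P * (δ + A)) / (R_A / (R_A + R_P))) ^ (R_A / (R_A + R_P))
      * (ρ * exp (R_A * (B - δ)) / (R_P / (R_A + R_P))) ^ (R_P / (R_A + R_P))
      = Gconst R_A R_P ρ * exp (R_A * R_P / (R_A + R_P) * (A + B)) := by
    intro δ
    rw [rpow_exp_div_mul_rpow_exp_div hRA hRP hρ]
    congr 2
    ring
  refine ⟨?attained, ?lower⟩
  case lower =>
    rintro _ ⟨δ, rfl⟩
    rw [← hgeom δ]
    exact rpow_div_mul_rpow_div_le_add hp hq hpq (exp_pos _).le (by positivity)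
  case attained =>
    set δ₀ := (log (ρ * R_A / R_P) + R_A * B - R_P * A) / (R_A + R_P) with hδ₀
    have hbalance : exp (R_P * (δ₀ + A)) = ρ * R_A / R_P * exp (R_A * (B - δ₀)) := by
      rw [← exp_log (by positivity : 0 < ρ * R_A / R_P), ← exp_add, hδ₀]
      congr 1
      field_simp
      ring
    refine ⟨δ₀, ?_⟩
    rw [← hgeom δ₀]
    refine (rpow_div_mul_rpow_div_eq_add hp hq hpq (by positivity) ?_).symm
    rw [hbalance]
    field_simp

end Gconst

section Action

variable {T aMax : ℝ} {a : ℝ → ℝ}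

lemma isAction_const {x : ℝ} (hx : x ∈ Icc 0 aMax) : IsAction T aMax fun _ => x :=
  ⟨measurable_const, fun _ _ => hx⟩

lemma IsAction.intervalIntegrable_comp (ha : IsAction T aMax a) (hT : 0 ≤ T) {f : ℝ → ℝ}
    (hf : Continuous f) : IntervalIntegrable (fun s => f (a s)) volume 0 T := by
  obtain ⟨C, hC⟩ := isCompact_Icc.exists_bound_of_continuousOn (hf.continuousOn (s := Icc 0 aMax))
  rw [intervalIntegrable_iff_integrableOn_Ioc_of_le hT]
  refine IntegrableOn.of_bound measure_Ioc_lt_top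
    (hf.measurable.comp ha.1).aestronglyMeasurable.restrict C ?_
  filter_upwards [ae_restrict_mem measurableSet_Ioc] with s hs
  exact hC _ (ha.2 s (Ioc_subset_Icc_self hs))

lemma IsAction.mul_sub_le_integral_sub (ha : IsAction T aMax a) (hT : 0 ≤ T) {k : ℝ → ℝ}
    (hk : Continuous k) {x : ℝ} (hx : ∀ y ∈ Icc 0 aMax, k x - x ≤ k y - y) :
    T * (k x - x) ≤ ∫ s in (0:ℝ)..T, (k (a s) - a s) := by
  have h := intervalIntegral.integral_mono_on hT intervalIntegrable_const
    (ha.intervalIntegrable_comp hT (hk.sub continuous_id)) fun s hs => hx (a s) (ha.2 s hs)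
  rwa [intervalIntegral.integral_const, smul_eq_mul, sub_zero] at h

end Action

section Objectives

variable {R_A R_P ρ T : ℝ} {k a : ℝ → ℝ}

lemma isGreatest_range_Fobj (hRA : 0 < R_A) (hRP : 0 < R_P) (hρ : 0 < ρ)
    (ha : IntervalIntegrable a volume 0 T) (hka : IntervalIntegrable (fun s => k (a s)) volume 0 T)
    (z γ αP αA : ℝ) :
    IsGreatest (range fun δ => Fobj R_A R_P ρ T k a z γ δ αP αA)
      (Gobj R_A R_P ρ T k a z γ αP αA) := by
  set A := -(1 - z) * (∫ s in (0:ℝ)..T, a s) + (R_P * (1 - z) ^ 2 / 2 + γ / 2) * αP * T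
  set B := (∫ s in (0:ℝ)..T, k (a s)) - z * (∫ s in (0:ℝ)..T, a s)
    + (R_A * z ^ 2 / 2 - γ / 2) * αA * T
  have hF : (fun δ => Fobj R_A R_P ρ T k a z γ δ αP αA)
      = fun δ => -(exp (R_P * (δ + A)) + ρ * exp (R_A * (B - δ))) := by
    funext δ
    rw [Fobj, neg_add']
    congr 3 <;> ring
  have hG : Gobj R_A R_P ρ T k a z γ αP αA
      = -(Gconst R_A R_P ρ * exp (R_A * R_P / (R_A + R_P) * (A + B))) := by
    rw [Gobj, intervalIntegral.integral_sub hka ha, Gconst]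
    congr 4
    ring
  rw [hF, hG, range_comp' Neg.neg]
  exact (StrictAnti.map_isGreatest fun _ _ h => neg_lt_neg h).2 (isLeast_exp_add_exp hRA hRP hρ A B)

lemma continuous_Gobj_gamma (z αP αA : ℝ) :
    Continuous fun γ => Gobj R_A R_P ρ T k a z γ αP αA := by
  unfold Gobj; fun_prop

lemma Gobj_at_gamma_R_A_mul_sq (z αP αA : ℝ) :
    Gobj R_A R_P ρ T k a z (R_A * z ^ 2) αP αA = Gobj R_A R_P ρ T k a z 0 αP αP := by
  unfold Gobj; congr 4; ring

lemma Gobj_le_Gobj_const {aMax : ℝ} (hRA : 0 < R_A) (hRP : 0 < R_P)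
    (hρ : 0 < ρ) (hT : 0 ≤ T) (hk : Continuous k) {x : ℝ}
    (hx : ∀ y ∈ Icc 0 aMax, k x - x ≤ k y - y) (ha : IsAction T aMax a) {z γ αP αA : ℝ}
    (hγ : γ < R_A * z ^ 2) (hαP : 0 ≤ αP) (hα : αP ≤ αA) :
    Gobj R_A R_P ρ T k a z γ αP αA
      ≤ Gobj R_A R_P ρ T k (fun _ => x) (R_P / (R_A + R_P)) 0 αP αP := by
  have hcost := ha.mul_sub_le_integral_sub hT hk hx
  have hzmin := weighted_sq_ge hRA hRP z
  have hexcess : 0 ≤ T / 2 * (αA - αP) * (R_A * z ^ 2 - γ) := by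
    have : 0 ≤ αA - αP := by linarith
    have : 0 ≤ R_A * z ^ 2 - γ := by linarith
    positivity
  rw [Gobj, Gobj, intervalIntegral.integral_const, smul_eq_mul, sub_zero]
  gcongr -(_ * exp (_ * ?_))
  linarith [mul_nonneg (mul_nonneg hT hαP) (sub_nonneg.2 hzmin)]

end Objectives

theorem sup_Q_mid_low_general (R_A R_P ρ T aMax : ℝ) (k : ℝ → ℝ)
    (hRA : 0 < R_A) (hRP : 0 < R_P) (hρ : 0 < ρ) (hT : 0 < T)
    (hkcont : Continuous k)
    (astar : ℝ) (hastar_mem : astar ∈ Set.Icc (0 : ℝ) aMax)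
    (hastar_min : ∀ x ∈ Set.Icc (0 : ℝ) aMax, k astar - astar ≤ k x - x)
    (αPhigh αAhigh : ℝ) (hαP : 0 < αPhigh) (hlt : αPhigh < αAhigh) :
    IsLUB {x : ℝ | ∃ a z γ δ, IsAction T aMax a ∧
        -(R_P * (1 - z) ^ 2) < γ ∧ γ < R_A * z ^ 2 ∧
        x = Fobj R_A R_P ρ T k a z γ δ αPhigh αAhigh}
      (Gobj R_A R_P ρ T k (fun _ => astar) (R_P / (R_A + R_P)) 0 αPhigh αPhigh) := by
  set S := {x : ℝ | ∃ a z γ δ, IsAction T aMax a ∧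
        -(R_P * (1 - z) ^ 2) < γ ∧ γ < R_A * z ^ 2 ∧
        x = Fobj R_A R_P ρ T k a z γ δ αPhigh αAhigh}
  have hsup : ∀ {a}, IsAction T aMax a → ∀ z γ, IsGreatest
      (range fun δ => Fobj R_A R_P ρ T k a z γ δ αPhigh αAhigh)
      (Gobj R_A R_P ρ T k a z γ αPhigh αAhigh) := fun ha z γ =>
    isGreatest_range_Fobj hRA hRP hρ (ha.intervalIntegrable_comp hT.le continuous_id)
      (ha.intervalIntegrable_comp hT.le hkcont) z γ αPhigh αAhigh
  refine isLUB_of_mem_closure ?upper ?approx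
  case upper =>
    rintro _ ⟨a, z, γ, δ, ha, -, hγ, rfl⟩
    exact ((hsup ha z γ).2 ⟨δ, rfl⟩).trans
      (Gobj_le_Gobj_const hRA hRP hρ hT.le hkcont hastar_min ha hγ hαP.le hlt.le)
  case approx =>
    set zs := R_P / (R_A + R_P)
    have hattained : ∀ γ ∈ Ioo (-(R_P * (1 - zs) ^ 2)) (R_A * zs ^ 2),
        Gobj R_A R_P ρ T k (fun _ => astar) zs γ αPhigh αAhigh ∈ S := by
      intro γ hγ
      obtain ⟨δ, hδ⟩ := (hsup (isAction_const hastar_mem) zs γ).1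
      exact ⟨_, zs, γ, δ, isAction_const hastar_mem, hγ.1, hγ.2, hδ.symm⟩
    have hlt_zs : -(R_P * (1 - zs) ^ 2) < R_A * zs ^ 2 := by
      have hzs : 0 < zs := by positivity
      linarith [mul_pos hRA (pow_pos hzs 2), mul_nonneg hRP.le (sq_nonneg (1 - zs))]
    rw [← Gobj_at_gamma_R_A_mul_sq]
    exact mem_closure_of_tendsto
      ((continuous_Gobj_gamma zs αPhigh αAhigh).tendsto _ |>.mono_left nhdsWithin_le_nhds)
      (mem_of_superset (Ioo_mem_nhdsLT hlt_zs) hattained)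

/-- Lemma 3.3(iii)a: if `α_P^high < α_A^high`, the supremum of `F` over deterministic
actions, `z`, `δ` and `-R_P(1-z)² < γ < R_A z²` equals `G(a*, z*, α_P^high)`. -/
theorem sup_Q_mid_low (R_A R_P ρ T aMax : ℝ) (k : ℝ → ℝ)
    (hRA : 0 < R_A) (hRP : 0 < R_P) (hρ : 0 < ρ) (hT : 0 < T) (haMax : 0 < aMax)
    (hkcont : Continuous k) (hkconv : StrictConvexOn ℝ Set.univ k) (hkmono : StrictMono k)
    (astar : ℝ) (hastar_mem : astar ∈ Set.Icc (0 : ℝ) aMax)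
    (hastar_min : ∀ x ∈ Set.Icc (0 : ℝ) aMax, k astar - astar ≤ k x - x)
    (αPhigh αAhigh : ℝ) (hαP : 0 < αPhigh) (hlt : αPhigh < αAhigh) :
    IsLUB {x : ℝ | ∃ a z γ δ, IsAction T aMax a ∧
        -(R_P * (1 - z) ^ 2) < γ ∧ γ < R_A * z ^ 2 ∧
        x = Fobj R_A R_P ρ T k a z γ δ αPhigh αAhigh}
      (Gobj R_A R_P ρ T k (fun _ => astar) (R_P / (R_A + R_P)) 0 αPhigh αPhigh) :=
  sup_Q_mid_low_general R_A R_P ρ T aMax k hRA hRP hρ hT hkcont astar hastar_mem hastar_min αPhigh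
    αAhigh hαP hlt
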